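/- Let f be an r-plateaued Boolean function in m variables with 1 ≤ r ≤ m (that is, f is plateaued but not bent). Then the quantity |{x ∈ 𝔽₂^m : f(x) = f(x+a)}| takes the same value for every nonzero a ∈ 𝔽₂^m if and only if m = 1 or f is a constant function. -/

import Mathlib

open Finset

/-- dot product on 𝔽₂^m -/
def dotp {m : ℕ} (a x : Fin m → ZMod 2) : ZMod 2 := ∑ i, a i * x i

/-- (−1)^a for a ∈ 𝔽₂, as an integer -/
def sgn (a : ZMod 2) : ℤ := if a = 0 then 1 else -1

/-- Walsh transform of f on a finite subset P of 𝔽₂^m -/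
def walsh {m : ℕ} (P : Finset (Fin m → ZMod 2)) (f : (Fin m → ZMod 2) → ZMod 2)
    (u : Fin m → ZMod 2) : ℤ :=
  ∑ x ∈ P, sgn (f x + dotp u x)

/-- Walsh transform of f on all of 𝔽₂^m -/
def walshF {m : ℕ} (f : (Fin m → ZMod 2) → ZMod 2) (u : Fin m → ZMod 2) : ℤ :=
  walsh Finset.univ f u


lemma sgn_add : ∀ a b : ZMod 2, sgn (a + b) = sgn a * sgn b := by decide

lemma dotp_add_right {m : ℕ} (u x y : Fin m → ZMod 2) :
    dotp u (x + y) = dotp u x + dotp u y := by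
  simp [dotp, mul_add, Finset.sum_add_distrib]

lemma card_V (m : ℕ) : Fintype.card (Fin m → ZMod 2) = 2 ^ m := by simp

lemma orth {m : ℕ} (u : Fin m → ZMod 2) (hu : u ≠ 0) :
    ∑ x : Fin m → ZMod 2, sgn (dotp u x) = 0 := by
  obtain ⟨i, hi⟩ : ∃ i, u i ≠ 0 := by
    by_contra h; push_neg at h; exact hu (funext h)
  have hui : u i = 1 := by
    have : ∀ a : ZMod 2, a ≠ 0 → a = 1 := by decide
    exact this _ hi
  set e : Fin m → ZMod 2 := Pi.single i 1 with he
  have hde : dotp u e = 1 := by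
    simp [dotp, he, Pi.single_apply, mul_ite, hui]
  have h1 : ∑ x : Fin m → ZMod 2, sgn (dotp u x)
      = ∑ x : Fin m → ZMod 2, sgn (dotp u (x + e)) :=
    (Fintype.sum_equiv (Equiv.addRight e) _ _ (fun x => rfl)).symm
  have h2 : ∀ x : Fin m → ZMod 2, sgn (dotp u (x + e)) = - sgn (dotp u x) := by
    intro x
    rw [dotp_add_right, hde]
    have : ∀ a : ZMod 2, sgn (a + 1) = - sgn a := by decide
    exact this _
  have h4 : ∑ x : Fin m → ZMod 2, sgn (dotp u x)
      = - ∑ x : Fin m → ZMod 2, sgn (dotp u x) :=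
    h1.trans ((Finset.sum_congr rfl (fun x _ => h2 x)).trans (Finset.sum_neg_distrib _))
  omega

lemma addself {m : ℕ} (x y : Fin m → ZMod 2) : x + (x + y) = y := by
  funext i
  have h : ∀ a b : ZMod 2, a + (a + b) = b := by decide
  simp only [Pi.add_apply]; exact h _ _

lemma delta_card {m : ℕ} (f : (Fin m → ZMod 2) → ZMod 2) (a : Fin m → ZMod 2) :
    ∑ x : Fin m → ZMod 2, sgn (f x + f (x + a))
      = 2 * ((Finset.univ.filter (fun x => f x = f (x + a))).card : ℤ) - 2 ^ m := by
  have h : ∀ p q : ZMod 2, sgn (p + q) = (if p = q then (2:ℤ) else 0) - 1 := by decide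
  calc ∑ x : Fin m → ZMod 2, sgn (f x + f (x + a))
      = ∑ x : Fin m → ZMod 2, ((if f x = f (x + a) then (2:ℤ) else 0) - 1) :=
        Finset.sum_congr rfl (fun x _ => h _ _)
    _ = (∑ x : Fin m → ZMod 2, if f x = f (x + a) then (2:ℤ) else 0)
        - ∑ _x : Fin m → ZMod 2, (1:ℤ) := Finset.sum_sub_distrib _ _
    _ = 2 * ((Finset.univ.filter (fun x => f x = f (x + a))).card : ℤ) - 2 ^ m := by
        rw [← Finset.sum_filter, Finset.sum_const, Finset.sum_const]
        simp [card_V, mul_comm]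

lemma key_id {m : ℕ} (f : (Fin m → ZMod 2) → ZMod 2) (u : Fin m → ZMod 2) :
    walshF f u ^ 2
      = ∑ a : Fin m → ZMod 2,
          (∑ x : Fin m → ZMod 2, sgn (f x + f (x + a))) * sgn (dotp u a) := by
  calc walshF f u ^ 2 = walshF f u * walshF f u := sq (walshF f u)
    _ = ∑ x : Fin m → ZMod 2, ∑ y : Fin m → ZMod 2,
          sgn (f x + dotp u x) * sgn (f y + dotp u y) := by
        rw [walshF, walsh, Finset.sum_mul_sum]
    _ = ∑ x : Fin m → ZMod 2, ∑ a : Fin m → ZMod 2,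
          sgn (f x + f (x + a) + dotp u a) := by
        refine Finset.sum_congr rfl (fun x _ => ?_)
        refine (Fintype.sum_equiv (Equiv.addLeft x) _ _ (fun y => ?_)).symm
        have h2 : dotp u x + dotp u (x + y) = dotp u y := by
          rw [← dotp_add_right, addself]
        simp only [Equiv.coe_addLeft]
        rw [← sgn_add]
        congr 1
        rw [← h2]
        ring
    _ = ∑ a : Fin m → ZMod 2, ∑ x : Fin m → ZMod 2,
          sgn (f x + f (x + a) + dotp u a) := Finset.sum_comm
    _ = ∑ a : Fin m → ZMod 2,
          (∑ x : Fin m → ZMod 2, sgn (f x + f (x + a))) * sgn (dotp u a) := by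
        refine Finset.sum_congr rfl (fun a _ => ?_)
        rw [Finset.sum_mul]
        exact Finset.sum_congr rfl (fun x _ => sgn_add _ _)

lemma pow_ineq (m r : ℕ) (h2 : 2 ≤ m) (hr : 1 ≤ r) (hrm : r ≤ m) :
    2 ^ (2*m) + 2 ^ (m+r) < 2 ^ (2*m+r) := by
  rcases eq_or_lt_of_le hr with h1 | h1
  · have ha : 2 ^ (m+r) < 2 ^ (2*m) := Nat.pow_lt_pow_right one_lt_two (by omega)
    have hb : 2 ^ (2*m+r) = 2 ^ (2*m) * 2 := by rw [← h1]; rw [pow_succ]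
    omega
  · have ha : 2 ^ (m+r) ≤ 2 ^ (2*m) := Nat.pow_le_pow_right (by omega) (by omega)
    have hb : 2 ^ (2*m) * 2 < 2 ^ (2*m+r) := by
      rw [← pow_succ]
      exact Nat.pow_lt_pow_right one_lt_two (by omega)
    omega

lemma dotp_zero_left {m : ℕ} (a : Fin m → ZMod 2) : dotp 0 a = 0 := by
  simp [dotp]

lemma dotp_zero_right {m : ℕ} (a : Fin m → ZMod 2) : dotp a 0 = 0 := by
  simp [dotp]

lemma sgn_zero : sgn 0 = 1 := rfl


theorem stmt_9 (m r : ℕ) (hr1 : 1 ≤ r) (hrm : r ≤ m) (hpar : Even (m + r))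
    (f : (Fin m → ZMod 2) → ZMod 2)
    (hplat : ∀ a, walshF f a = 0 ∨ walshF f a = 2 ^ ((m + r) / 2) ∨
      walshF f a = -2 ^ ((m + r) / 2)) :
    (∃ c : ℕ, ∀ a : Fin m → ZMod 2, a ≠ 0 →
      (Finset.univ.filter (fun x => f x = f (x + a))).card = c)
    ↔ (m = 1 ∨ ∃ c : ZMod 2, ∀ x, f x = c) := by
  constructor
  · rintro ⟨c, hc⟩
    by_cases hm : m = 1
    · exact Or.inl hm
    right
    have hm2 : 2 ≤ m := by omega
    have hD : ∀ a : Fin m → ZMod 2, a ≠ 0 →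
        ∑ x : Fin m → ZMod 2, sgn (f x + f (x + a)) = 2 * (c:ℤ) - 2 ^ m := by
      intro a ha
      rw [delta_card, hc a ha]
    have hD0 : ∑ x : Fin m → ZMod 2, sgn (f x + f (x + 0)) = 2 ^ m := by
      have h : ∀ p : ZMod 2, sgn (p + p) = 1 := by decide
      simp only [add_zero, h]
      rw [Finset.sum_const, card_univ, card_V]
      simp
    have hkey : ∀ u : Fin m → ZMod 2, u ≠ 0 →
        walshF f u ^ 2 = 2 * 2 ^ m - 2 * (c:ℤ) := by
      intro u hu
      rw [key_id, ← Finset.add_sum_erase _ _ (Finset.mem_univ 0)]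
      have h0 : (∑ x : Fin m → ZMod 2, sgn (f x + f (x + 0))) * sgn (dotp u 0)
          = 2 ^ m := by rw [hD0, dotp_zero_right, sgn_zero, mul_one]
      have hrest : ∑ a ∈ Finset.univ.erase 0,
          (∑ x : Fin m → ZMod 2, sgn (f x + f (x + a))) * sgn (dotp u a)
          = (2 * (c:ℤ) - 2 ^ m) * (-1) := by
        calc ∑ a ∈ Finset.univ.erase 0,
              (∑ x : Fin m → ZMod 2, sgn (f x + f (x + a))) * sgn (dotp u a)
            = ∑ a ∈ Finset.univ.erase 0, (2 * (c:ℤ) - 2 ^ m) * sgn (dotp u a) := by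
              refine Finset.sum_congr rfl (fun a ha => ?_)
              rw [hD a (Finset.mem_erase.1 ha).1]
          _ = (2 * (c:ℤ) - 2 ^ m) * ∑ a ∈ Finset.univ.erase 0, sgn (dotp u a) := by
              rw [Finset.mul_sum]
          _ = (2 * (c:ℤ) - 2 ^ m) * (-1) := by
              rw [Finset.sum_erase_eq_sub (Finset.mem_univ 0), orth u hu,
                dotp_zero_right, sgn_zero]
              ring
      rw [h0, hrest]
      ring
    have hsq2 : ((m + r) / 2) * 2 = m + r := Nat.div_mul_cancel hpar.two_dvd
    have hzero : ∀ u : Fin m → ZMod 2, u ≠ 0 → walshF f u = 0 := by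
      intro u hu
      by_contra hW
      have hsq : walshF f u ^ 2 = 2 ^ (m + r) := by
        rcases hplat u with h | h | h
        · exact absurd h hW
        · rw [h, ← pow_mul, hsq2]
        · rw [h, neg_pow, ← pow_mul, hsq2]; norm_num
      have h2c : 2 * (2:ℤ) ^ m - 2 * (c:ℤ) = 2 ^ (m + r) := by
        rw [← hkey u hu, hsq]
      have h0 : walshF f 0 ^ 2
          = 2 ^ m + (2 * (c:ℤ) - 2 ^ m) * (2 ^ m - 1) := by
        rw [key_id, ← Finset.add_sum_erase _ _ (Finset.mem_univ 0)]
        have ha : (∑ x : Fin m → ZMod 2, sgn (f x + f (x + 0)))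
            * sgn (dotp (0 : Fin m → ZMod 2) 0)
            = 2 ^ m := by rw [hD0, dotp_zero_left, sgn_zero, mul_one]
        have hb : ∑ a ∈ Finset.univ.erase (0 : Fin m → ZMod 2),
            (∑ x : Fin m → ZMod 2, sgn (f x + f (x + a))) * sgn (dotp 0 a)
            = (2 * (c:ℤ) - 2 ^ m) * (2 ^ m - 1) := by
          calc ∑ a ∈ Finset.univ.erase (0 : Fin m → ZMod 2),
                (∑ x : Fin m → ZMod 2, sgn (f x + f (x + a))) * sgn (dotp 0 a)
              = ∑ a ∈ Finset.univ.erase (0 : Fin m → ZMod 2), (2 * (c:ℤ) - 2 ^ m) := by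
                refine Finset.sum_congr rfl (fun a ha' => ?_)
                rw [hD a (Finset.mem_erase.1 ha').1, dotp_zero_left, sgn_zero,
                  mul_one]
            _ = (2 * (c:ℤ) - 2 ^ m) * (2 ^ m - 1) := by
                rw [Finset.sum_const, Finset.card_erase_of_mem (Finset.mem_univ 0),
                  card_univ, card_V, nsmul_eq_mul,
                  Nat.cast_sub (Nat.one_le_two_pow)]
                push_cast
                ring
        rw [ha, hb]
      have hnn : 0 ≤ walshF f 0 ^ 2 := sq_nonneg _
      have hlt : (2:ℤ) ^ (2*m) + 2 ^ (m+r) < 2 ^ (2*m+r) := by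
        exact_mod_cast pow_ineq m r hm2 hr1 hrm
      have e1 : (2:ℤ) ^ (2*m) = 2 ^ m * 2 ^ m := by rw [two_mul, pow_add]
      have e2 : (2:ℤ) ^ (2*m+r) = 2 ^ m * 2 ^ (m+r) := by
        rw [two_mul, pow_add, pow_add, pow_add]; ring
      nlinarith [h0, h2c, hnn, hlt, e1, e2]
    -- now all nonzero Walsh coefficients vanish, deduce f constant
    have hu0 : ∃ u : Fin m → ZMod 2, u ≠ 0 := by
      refine ⟨Pi.single ⟨0, by omega⟩ 1, fun h => ?_⟩
      have := congrFun h ⟨0, by omega⟩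
      simp [Pi.single_apply] at this
    obtain ⟨u, hu⟩ := hu0
    have h1 : (2:ℤ) * 2 ^ m - 2 * (c:ℤ) = 0 := by
      rw [← hkey u hu, hzero u hu]
      ring
    have hc2 : (c:ℤ) = 2 ^ m := by linarith
    have hcard : ∀ a : Fin m → ZMod 2, a ≠ 0 →
        (Finset.univ.filter (fun x => f x = f (x + a))) = Finset.univ := by
      intro a ha
      apply Finset.eq_univ_of_card
      rw [hc a ha, card_V]
      exact_mod_cast hc2
    refine ⟨f 0, fun x => ?_⟩
    by_cases hx : x = 0
    · rw [hx]
    · have := hcard x hx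
      have h2 := Finset.mem_filter.1 (this ▸ Finset.mem_univ (0 : Fin m → ZMod 2))
      rw [h2.2, zero_add]
  · rintro (hm | ⟨c0, hf⟩)
    · subst hm
      refine ⟨(Finset.univ.filter
        (fun x => f x = f (x + fun _ => 1))).card, fun a ha => ?_⟩
      have : a = fun _ => (1 : ZMod 2) := by
        have h : ∀ a : Fin 1 → ZMod 2, a ≠ 0 → a = (fun _ => 1) := by decide
        exact h a ha
      rw [this]
    · refine ⟨2 ^ m, fun a ha => ?_⟩
      have he : (Finset.univ.filter (fun x : Fin m → ZMod 2 => f x = f (x + a)))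
          = Finset.univ := by
        apply Finset.eq_univ_of_forall
        intro x
        simp [hf]
      rw [he, Finset.card_univ, card_V]
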